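/- For the joint density f(x,y) = 2·φ(x)·φ(y)·Φ(λxy) on ℝ², the marginal density of the first coordinate is the standard normal density: ∫_ℝ 2·φ(x)·φ(y)·Φ(λxy) dy = φ(x) for every x ∈ ℝ and every λ ∈ ℝ. -/

import Mathlib

open Real MeasureTheory

/-- Standard normal pdf. -/
noncomputable def phi (x : ℝ) : ℝ := (Real.sqrt (2 * Real.pi))⁻¹ * Real.exp (-x ^ 2 / 2)

/-- Standard normal cdf. -/
noncomputable def Phi (x : ℝ) : ℝ := ∫ t in Set.Iic x, phi t

/-!
Since `Φ(t) + Φ(-t) = 1`, the function `y ↦ Φ(λxy)` is `1/2` plus an odd function of `y`;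
integrated against the even density `φ`, the odd part contributes nothing, so the marginal
is `2 φ(x) · 1/2 = φ(x)`.
-/

open ProbabilityTheory

theorem integral_mul_eq_half_integral_of_add_comp_neg_eq_one {G : Type*} [MeasurableSpace G]
    [AddGroup G] [MeasurableNeg G] {μ : Measure G} [μ.IsNegInvariant] {g h : G → ℝ}
    (hg : ∀ y, g (-y) = g y) (hh : ∀ y, h y + h (-y) = 1)
    (hint : Integrable (fun y => h y * g y) μ) :
    ∫ y, h y * g y ∂μ = (∫ y, g y ∂μ) / 2 := by
  have hflip : ∫ y, h (-y) * g y ∂μ = ∫ y, h y * g y ∂μ := by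
    simpa only [hg] using integral_neg_eq_self (fun y => h y * g y) μ
  have hsum : ∫ y, h y * g y ∂μ + ∫ y, h (-y) * g y ∂μ = ∫ y, g y ∂μ := by
    rw [← integral_add hint (by simpa only [hg] using hint.comp_neg)]
    simp only [← add_mul, hh, one_mul]
  linarith

theorem phi_eq_gaussianPDFReal : phi = gaussianPDFReal 0 1 := by
  ext x
  simp [phi, gaussianPDFReal]

theorem phi_neg (x : ℝ) : phi (-x) = phi x := by simp [phi]

theorem integrable_phi : Integrable phi := by
  rw [phi_eq_gaussianPDFReal]
  exact integrable_gaussianPDFReal 0 1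

theorem integral_phi : ∫ x, phi x = 1 := by
  rw [phi_eq_gaussianPDFReal]
  exact integral_gaussianPDFReal_eq_one 0 one_ne_zero

theorem Phi_eq_cdf : Phi = cdf (gaussianReal 0 1) := by
  ext x
  rw [cdf_eq_real, measureReal_def, gaussianReal_apply_eq_integral 0 one_ne_zero,
    ENNReal.toReal_ofReal (setIntegral_nonneg measurableSet_Iic fun y _ =>
      gaussianPDFReal_nonneg 0 1 y), Phi, phi_eq_gaussianPDFReal]

theorem Phi_add_Phi_neg (a : ℝ) : Phi a + Phi (-a) = 1 := by
  have h : Phi a = ∫ t in Set.Ioi (-a), phi t := by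
    rw [Phi, ← integral_comp_neg_Iic]
    simp only [phi_neg]
  rw [add_comm, Phi, h, intervalIntegral.integral_Iic_add_Ioi integrable_phi.integrableOn
    integrable_phi.integrableOn, integral_phi]

theorem integrable_Phi_const_mul_mul_phi (c : ℝ) :
    Integrable (fun y => Phi (c * y) * phi y) := by
  rw [Phi_eq_cdf]
  refine integrable_phi.bdd_mul (c := 1)
    ((monotone_cdf _).measurable.comp (measurable_const_mul c)).aestronglyMeasurable
    (ae_of_all _ fun y => ?_)
  rw [Real.norm_eq_abs, abs_of_nonneg (cdf_nonneg _ _)]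
  exact cdf_le_one _ _

theorem integral_Phi_const_mul_mul_phi (c : ℝ) : ∫ y, Phi (c * y) * phi y = 1 / 2 := by
  rw [integral_mul_eq_half_integral_of_add_comp_neg_eq_one phi_neg
    (fun y => by simpa only [mul_neg] using Phi_add_Phi_neg (c * y))
    (integrable_Phi_const_mul_mul_phi c), integral_phi]

theorem skew_bivariate_normal_marginal (l x : ℝ) :
    ∫ y : ℝ, 2 * phi x * phi y * Phi (l * x * y) = phi x := by
  calc ∫ y, 2 * phi x * phi y * Phi (l * x * y)
      = 2 * phi x * ∫ y, Phi (l * x * y) * phi y := by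
        rw [← integral_const_mul]
        congr 1 with y
        ring
    _ = phi x := by
        rw [integral_Phi_const_mul_mul_phi]
        ring
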